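/- arXiv:2411.07910 — 2 statements merged into one kernel-verified Lean document; each statement's English description precedes it below -/
import Mathlib

section
/- Let i ≥ 1, z ∈ X, and let g ∈ ker d_i satisfy g = g·c_z. Write g = Σ_{j=1}^n α_j (w_j,z_j) ⊗ c_{z_j,z} with (w_j,z_j) ∈ C^i, z_j ≤ z and α_j ∈ k, and set v = Σ_{j=1}^n α_j (w_j,z_j) ∈ kC^i. Then: (1) v ∈ ker ∂_i; (2) every (w_j,z_j) with α_j ≠ 0 satisfies z_j < z; hence (3) v ∈ (ker ∂_i)_z. -/
set_option maxRecDepth 16000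
set_option linter.unusedSectionVars false
set_option maxHeartbeats 1000000

open Finsupp

variable (k : Type) [Field k] (X : Type) [PartialOrder X] [Fintype X] [DecidableEq X]

/-- Ambient type in which the `i`-cycles live: `Amb 0 = X`,
`Amb (i+1) = (Amb i →₀ k) × X`. -/
def Amb : ℕ → Type
  | 0 => X
  | i + 1 => ((Amb i) →₀ k) × X

/-- The "vertex" (second coordinate) of an element of `Amb i`. -/
def vtx : ∀ i : ℕ, Amb k X i → X
  | 0, a => a
  | _ + 1, p => p.2

/-- The ambient boundary map `∂_{i+1} : k C^{i+1} → k C^i`, defined on the whole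
free module `Amb (i+1) →₀ k` by `(w, z) ↦ w`. -/
noncomputable def bd (i : ℕ) : (Amb k X (i + 1) →₀ k) →ₗ[k] (Amb k X i →₀ k) :=
  Finsupp.linearCombination k (fun p : Amb k X (i + 1) => p.1)

/-- `(ker ∂_{i+1})_z`: the subspace of elements of `ker ∂_{i+1}`, supported on `C^{i+1}`,
all of whose support elements have second coordinate `< z`. -/
noncomputable def Kz (C : ∀ i : ℕ, Set (Amb k X i)) (i : ℕ) (z : X) :
    Submodule k (Amb k X (i + 1) →₀ k) :=
  LinearMap.ker (bd k X i) ⊓ Finsupp.supported k k (C (i + 1)) ⊓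
    Finsupp.supported k k {p : Amb k X (i + 1) | vtx k X (i + 1) p < z}

/-- `(ker ∂_{i+1})_{z^-} = Σ_{z' ⋖ z} (ker ∂_{i+1})_{z'}`. -/
noncomputable def Kpred (C : ∀ i : ℕ, Set (Amb k X i)) (i : ℕ) (z : X) :
    Submodule k (Amb k X (i + 1) →₀ k) :=
  ⨆ z' ∈ {z' : X | z' ⋖ z}, Kz k X C i z'

/-- `B^{i+2}_z'`: the set of `w` with `(w, z) ∈ C^{i+2}`. -/
def Bset (C : ∀ i : ℕ, Set (Amb k X i)) (i : ℕ) (z : X) : Set (Amb k X (i + 1) →₀ k) :=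
  {w | (⟨w, z⟩ : Amb k X (i + 2)) ∈ C (i + 2)}

/-- The data of an admissible choice of `i`-cycles `C^i` for the poset `X` at the point `x`:
`C^0 = {x}`, `C^1 = {(x,y) : y ∈ x⁺}` and, recursively, for each `z` the set
`B^{i+2}_z' = {w | (w,z) ∈ C^{i+2}}` is a basis of a complement of `(ker ∂_{i+1})_{z⁻}`
inside `(ker ∂_{i+1})_z`. -/
structure CycleData (x : X) : Type 1 where
  C : ∀ i : ℕ, Set (Amb k X i)
  hC0 : C 0 = {x}
  hC1 : C 1 = {p : Amb k X 1 | ∃ y : X, x ⋖ y ∧ p = ⟨Finsupp.single x 1, y⟩}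
  indep : ∀ (i : ℕ) (z : X),
    LinearIndependent k (Subtype.val : Bset k X C i z → (Amb k X (i + 1) →₀ k))
  disj : ∀ (i : ℕ) (z : X),
    Submodule.span k (Bset k X C i z) ⊓ Kpred k X C i z = ⊥
  compl : ∀ (i : ℕ) (z : X),
    Submodule.span k (Bset k X C i z) ⊔ Kpred k X C i z = Kz k X C i z

variable [DecidableRel (α := X) (· ≤ ·)]

instance : DecidableRel (α := X) (· < ·) := fun a b =>
  decidable_of_iff (a ≤ b ∧ ¬ b ≤ a) lt_iff_le_not_ge.symm

instance : LocallyFiniteOrder X := Fintype.toLocallyFiniteOrder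

/-- The incidence algebra `Λ = kQ/I` of the poset `X`: functions on the pairs `a ≤ b`,
`c_{a,b}` corresponding to the characteristic function of `(a,b)`. -/
abbrev Lam := IncidenceAlgebra k X

/-- `Λ₀`, the (commutative, semisimple) subalgebra of `Λ` spanned by the stationary paths
`c_a`, identified with `k^X`. -/
abbrev Lam0 := X → k

/-- The path `c_{a,b}` for `a ≤ b` (and junk value `0` if `a ≰ b`). -/
def cpath (a b : X) : Lam k X :=
  ⟨fun a' b' => if a' = a ∧ b' = b ∧ a ≤ b then 1 else 0, by
    intro a' b' h
    simp only [ite_eq_right_iff, one_ne_zero]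
    rintro ⟨rfl, rfl, hab⟩
    exact (h hab).elim⟩

/-- The stationary path `c_a = c_{a,a}`. -/
def statp (a : X) : Lam k X := cpath k X a a

/-- The embedding of `Λ₀ = k^X` into `Λ` as the span of the stationary paths. -/
def diagHom : Lam0 k X →+* Lam k X where
  toFun f := ⟨fun a b => if a = b then f a else 0, by
    intro a b h
    simp only [ite_eq_right_iff]
    rintro rfl
    exact (h le_rfl).elim⟩
  map_one' := by
    ext a b _
    simp [IncidenceAlgebra.one_apply]
  map_mul' f g := by
    ext a b hab
    rcases eq_or_ne a b with rfl | hne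
    · simp [IncidenceAlgebra.mul_apply]
    · simp only [IncidenceAlgebra.coe_mk, IncidenceAlgebra.mul_apply, if_neg hne]
      rw [Finset.sum_eq_zero]
      intro x hx
      rcases eq_or_ne a x with rfl | hax
      · rw [if_neg hne]; ring
      · rw [if_neg hax]; ring
  map_zero' := by ext a b _; simp
  map_add' f g := by
    ext a b hab
    rcases eq_or_ne a b with rfl | hne
    · simp [IncidenceAlgebra.add_apply]
    · simp [IncidenceAlgebra.add_apply, if_neg hne]

/-- `Λ` is a `Λ₀`-module via left multiplication through `diagHom`. -/
noncomputable instance : Module (Lam0 k X) (Lam k X) := Module.compHom _ (diagHom k X)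

/-- The endomorphism of the free module `Amb i →₀ k` given by `f ∈ Λ₀ = k^X`, where `c_a`
acts on a basis element `p` by `δ_{vtx p, a}`. -/
noncomputable def phiAmbFun (i : ℕ) (f : Lam0 k X) :
    (Amb k X i →₀ k) →ₗ[k] (Amb k X i →₀ k) :=
  Finsupp.lsum k fun p => f (vtx k X i p) • Finsupp.lsingle p

theorem phiAmbFun_single (i : ℕ) (f : Lam0 k X) (p : Amb k X i) (c : k) :
    phiAmbFun k X i f (Finsupp.single p c) = f (vtx k X i p) • Finsupp.single p c := by
  rw [phiAmbFun, Finsupp.lsum_single, LinearMap.smul_apply, Finsupp.lsingle_apply]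

/-- The action of `Λ₀` on the free module `Amb i →₀ k` as a ring homomorphism to
endomorphisms. -/
noncomputable def phiAmb (i : ℕ) : Lam0 k X →+* Module.End k (Amb k X i →₀ k) where
  toFun f := phiAmbFun k X i f
  map_one' := by
    apply Finsupp.lhom_ext
    intro p c
    rw [phiAmbFun_single, Module.End.one_apply, Pi.one_apply, one_smul]
  map_mul' f g := by
    apply Finsupp.lhom_ext
    intro p c
    show phiAmbFun k X i (f * g) (Finsupp.single p c) =
      (phiAmbFun k X i f * phiAmbFun k X i g) (Finsupp.single p c)
    rw [Module.End.mul_apply, phiAmbFun_single, phiAmbFun_single, map_smul,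
      phiAmbFun_single, smul_smul, Pi.mul_apply, mul_comm]
  map_zero' := by
    apply Finsupp.lhom_ext
    intro p c
    rw [phiAmbFun_single, Pi.zero_apply, zero_smul, LinearMap.zero_apply]
  map_add' f g := by
    apply Finsupp.lhom_ext
    intro p c
    rw [phiAmbFun_single, LinearMap.add_apply, phiAmbFun_single, phiAmbFun_single,
      Pi.add_apply, add_smul]

theorem phiAmb_apply (i : ℕ) (f : Lam0 k X) (g : Amb k X i →₀ k) (q : Amb k X i) :
    phiAmb k X i f g q = f (vtx k X i q) * g q := by
  induction g using Finsupp.induction_linear with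
  | zero => simp
  | add a b ha hb => simp [ha, hb, mul_add]
  | single p c =>
    show phiAmbFun k X i f (Finsupp.single p c) q = _
    rw [phiAmbFun_single]
    rcases eq_or_ne p q with rfl | hpq
    · simp [Finsupp.single_apply]
    · classical
      rw [Finsupp.smul_apply, Finsupp.single_apply, if_neg hpq, smul_zero, mul_zero]

theorem phiAmb_mem_supported (i : ℕ) (f : Lam0 k X) (s : Set (Amb k X i))
    (g : Amb k X i →₀ k) (hg : g ∈ Finsupp.supported k k s) :
    phiAmb k X i f g ∈ Finsupp.supported k k s := by
  rw [Finsupp.mem_supported'] at hg ⊢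
  intro p hp
  rw [phiAmb_apply, hg p hp, mul_zero]

/-- The action of `Λ₀` on `kC^i` (the span of the `i`-cycles). -/
noncomputable def phiKC (C : ∀ i : ℕ, Set (Amb k X i)) (i : ℕ) :
    Lam0 k X →+* Module.End k ↥(Finsupp.supported k k (C i)) where
  toFun f := (phiAmb k X i f).restrict
    (fun g hg => phiAmb_mem_supported k X i f (C i) g hg)
  map_one' := by
    apply LinearMap.ext
    rintro ⟨g, hg⟩
    apply Subtype.ext
    simp [LinearMap.restrict_apply]
  map_mul' f g := by
    apply LinearMap.ext
    rintro ⟨h, hh⟩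
    apply Subtype.ext
    simp [LinearMap.restrict_apply]
  map_zero' := by
    apply LinearMap.ext
    rintro ⟨g, hg⟩
    apply Subtype.ext
    simp [LinearMap.restrict_apply]
  map_add' f g := by
    apply LinearMap.ext
    rintro ⟨h, hh⟩
    apply Subtype.ext
    simp [LinearMap.restrict_apply]

/-- `kC^i` as a `Λ₀`-module. -/
noncomputable instance (C : ∀ i : ℕ, Set (Amb k X i)) (i : ℕ) :
    Module (Lam0 k X) ↥(Finsupp.supported k k (C i)) :=
  Module.compHom _ (phiKC k X C i)

open scoped TensorProduct

/-- Right multiplication by `a ∈ Λ` as a `Λ₀`-linear endomorphism of `Λ`. -/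
noncomputable def rmulL (a : Lam k X) : Lam k X →ₗ[Lam0 k X] Lam k X where
  toFun b := b * a
  map_add' b c := add_mul b c a
  map_smul' f b := by
    show (diagHom k X f * b) * a = diagHom k X f * (b * a)
    rw [mul_assoc]

/-- The right `Λ`-module structure (i.e. left `Λᵐᵒᵖ`-module structure) on `M ⊗_{Λ₀} Λ`,
`Λ` being a `Λ₀`-`Λ`-bimodule via right multiplication. -/
noncomputable instance modOpTensor (M : Type) [AddCommGroup M] [Module (Lam0 k X) M] :
    Module (Lam k X)ᵐᵒᵖ (M ⊗[Lam0 k X] Lam k X) where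
  smul a t := LinearMap.lTensor M (rmulL k X a.unop) t
  one_smul t := by
    show LinearMap.lTensor M (rmulL k X (1 : (Lam k X)ᵐᵒᵖ).unop) t = t
    have : rmulL k X ((1 : (Lam k X)ᵐᵒᵖ).unop) = LinearMap.id := by
      apply LinearMap.ext; intro b
      show b * 1 = b
      rw [mul_one]
    rw [this, LinearMap.lTensor_id, LinearMap.id_apply]
  mul_smul a b t := by
    show LinearMap.lTensor M (rmulL k X (a * b).unop) t =
      LinearMap.lTensor M (rmulL k X a.unop) (LinearMap.lTensor M (rmulL k X b.unop) t)
    have : rmulL k X ((a * b).unop) = (rmulL k X a.unop).comp (rmulL k X b.unop) := by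
      apply LinearMap.ext; intro c
      show c * (b.unop * a.unop) = (c * b.unop) * a.unop
      rw [mul_assoc]
    rw [this, LinearMap.lTensor_comp, LinearMap.comp_apply]
  smul_zero a := map_zero _
  smul_add a s t := map_add _ s t
  add_smul a b t := by
    show LinearMap.lTensor M (rmulL k X (a + b).unop) t =
      LinearMap.lTensor M (rmulL k X a.unop) t + LinearMap.lTensor M (rmulL k X b.unop) t
    have : rmulL k X ((a + b).unop) = rmulL k X a.unop + rmulL k X b.unop := by
      apply LinearMap.ext; intro c
      show c * (a.unop + b.unop) = c * a.unop + c * b.unop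
      rw [mul_add]
    rw [this, LinearMap.lTensor_add, LinearMap.add_apply]
  zero_smul t := by
    show LinearMap.lTensor M (rmulL k X (0 : (Lam k X)ᵐᵒᵖ).unop) t = 0
    have : rmulL k X ((0 : (Lam k X)ᵐᵒᵖ).unop) = 0 := by
      apply LinearMap.ext; intro c
      show c * 0 = 0
      rw [mul_zero]
    rw [this, LinearMap.lTensor_zero, LinearMap.zero_apply]

theorem opSmul_tmul (M : Type) [AddCommGroup M] [Module (Lam0 k X) M]
    (a : Lam k X) (m : M) (b : Lam k X) :
    (MulOpposite.op a) • (m ⊗ₜ[Lam0 k X] b) = m ⊗ₜ[Lam0 k X] (b * a) := rfl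

/-- The sum `q_z = Σ_{u ≤ z} c_{u,z}` of the paths ending at `z`. -/
noncomputable def qel (z : X) : Lam k X :=
  ∑ u ∈ Finset.univ.filter (· ≤ z), cpath k X u z

/-- `kC^i ⊗_{Λ₀} Λ`, the `i`-th term of the projective resolution, a right `Λ`-module. -/
noncomputable def TCmod (C : ∀ i : ℕ, Set (Amb k X i)) (i : ℕ) : Type :=
  ↥(Finsupp.supported k k (C i)) ⊗[Lam0 k X] Lam k X

noncomputable instance (C : ∀ i : ℕ, Set (Amb k X i)) (i : ℕ) : AddCommGroup (TCmod k X C i) :=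
  TensorProduct.addCommGroup (R := Lam0 k X) (M := ↥(Finsupp.supported k k (C i))) (N := Lam k X)

noncomputable instance (C : ∀ i : ℕ, Set (Amb k X i)) (i : ℕ) :
    Module (Lam k X)ᵐᵒᵖ (TCmod k X C i) :=
  modOpTensor k X ↥(Finsupp.supported k k (C i))

/-- The basis element of `kC^i` given by `p ∈ C^i`. -/
noncomputable def bas (C : ∀ i : ℕ, Set (Amb k X i)) (i : ℕ) (p : Amb k X i)
    (hp : p ∈ C i) : ↥(Finsupp.supported k k (C i)) :=
  ⟨Finsupp.single p 1, Finsupp.single_mem_supported k 1 hp⟩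

/-- The generator `(w,z) ⊗ 1` of `kC^i ⊗_{Λ₀} Λ` given by `(w,z) ∈ C^i`. -/
noncomputable def gen (C : ∀ i : ℕ, Set (Amb k X i)) (i : ℕ) (p : Amb k X i)
    (hp : p ∈ C i) : TCmod k X C i :=
  bas k X C i p hp ⊗ₜ[Lam0 k X] 1

/-- Evaluation of an element of `Λ` at the stationary pair `(z,z)`, a ring homomorphism. -/
noncomputable def evalHom (z : X) : Lam k X →+* k where
  toFun f := f z z
  map_one' := by simp
  map_mul' f g := by
    show (f * g) z z = f z z * g z z
    rw [IncidenceAlgebra.mul_apply, Finset.Icc_self, Finset.sum_singleton]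
  map_zero' := rfl
  map_add' f g := rfl

/-- The simple right `Λ`-module `S_z` at the vertex `z`: a copy of `k` on which `λ ∈ Λ`
acts by multiplication by `λ(z,z)`. -/
def SMod (_z : X) : Type := k

noncomputable instance (z : X) : AddCommGroup (SMod k X z) := inferInstanceAs (AddCommGroup k)
noncomputable instance (z : X) : Module k (SMod k X z) := inferInstanceAs (Module k k)
instance (z : X) : One (SMod k X z) := ⟨(1 : k)⟩

/-- The right `Λ`-module structure on `S_z`. -/
noncomputable instance (z : X) : Module (Lam k X)ᵐᵒᵖ (SMod k X z) :=
  Module.compHom k ((evalHom k X z).fromOpposite (fun a b => mul_comm _ _))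

/-- The right `Λ₀`-module structure on `S_z` (the restriction of the `Λ`-action). -/
noncomputable instance (z : X) : Module (Lam0 k X) (SMod k X z) :=
  Module.compHom k (Pi.evalRingHom (fun _ : X => k) z)

instance (z : X) : SMulCommClass (Lam k X)ᵐᵒᵖ k (SMod k X z) where
  smul_comm a c m := mul_left_comm (evalHom k X z (MulOpposite.unop a)) c m

instance (z : X) : SMulCommClass k (Lam k X)ᵐᵒᵖ (SMod k X z) where
  smul_comm c a m := (mul_left_comm (evalHom k X z (MulOpposite.unop a)) c m).symm

/-- The indecomposable projective right `Λ`-module `P_z = c_z Λ`. -/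
noncomputable def PMod (z : X) : Submodule (Lam k X)ᵐᵒᵖ (Lam k X) :=
  Submodule.span (Lam k X)ᵐᵒᵖ {statp k X z}

/-- The radical `M · J(Λ)` of a right `Λ`-module `M`, where `J(Λ)` is the Jacobson radical. -/
noncomputable def radMod (M : Type) [AddCommGroup M] [Module (Lam k X)ᵐᵒᵖ M] :
    Submodule (Lam k X)ᵐᵒᵖ M :=
  Submodule.span (Lam k X)ᵐᵒᵖ
    {m | ∃ a ∈ Ideal.jacobson (⊥ : Ideal (Lam k X)ᵐᵒᵖ), ∃ n : M, m = a • n}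

/-- `|B^i_b|`: the number of `i`-cycles with second coordinate `b`. -/
noncomputable def Bcard (C : ∀ i : ℕ, Set (Amb k X i)) (i : ℕ) (b : X) : ℕ :=
  Set.ncard {p : Amb k X i | p ∈ C i ∧ vtx k X i p = b}

/-- The predicate singling out the differentials `d_{i+1} : kC^{i+1} ⊗_{Λ₀} Λ → kC^i ⊗_{Λ₀} Λ`
of the resolution: `d ((w,z) ⊗ 1) = w ⊗ q_z` for `(w,z) ∈ C^{i+1}`. (These properties determine
the maps `d` uniquely.) -/
def IsDiff {x : X} (D : CycleData k X x)
    (d : ∀ i : ℕ, TCmod k X D.C (i + 1) →ₗ[(Lam k X)ᵐᵒᵖ] TCmod k X D.C i) : Prop :=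
  ∀ (i : ℕ) (p : Amb k X (i + 1)) (hp : p ∈ D.C (i + 1))
    (w : ↥(Finsupp.supported k k (D.C i))) (_hw : (w : Amb k X i →₀ k) = p.1),
    d i (gen k X D.C (i + 1) p hp) = w ⊗ₜ[Lam0 k X] qel k X (vtx k X (i + 1) p)


/-! ### Auxiliary lemmas -/

theorem diag_mul_apply (f : Lam0 k X) (g : Lam k X) (a b : X) :
    (diagHom k X f * g) a b = f a * g a b := by
  by_cases hab : a ≤ b
  · rw [IncidenceAlgebra.mul_apply,
      Finset.sum_eq_single_of_mem a (Finset.mem_Icc.mpr ⟨le_rfl, hab⟩)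
        (fun m _ hma => by
          show (if a = m then f a else 0) * g m b = 0
          rw [if_neg fun h => hma h.symm, zero_mul])]
    show (if a = a then f a else 0) * g a b = f a * g a b
    rw [if_pos rfl]
  · rw [IncidenceAlgebra.apply_eq_zero_of_not_le hab,
      IncidenceAlgebra.apply_eq_zero_of_not_le hab, mul_zero]

theorem dconst_mul (c : k) (g : Lam k X) :
    diagHom k X (fun _ => c) * g = c • g := by
  apply IncidenceAlgebra.ext
  intro a b _
  rw [diag_mul_apply, IncidenceAlgebra.constSMul_apply, smul_eq_mul]

theorem ia_sum_apply {ι : Type} (s : Finset ι) (F : ι → Lam k X) (a b : X) :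
    (∑ u ∈ s, F u) a b = ∑ u ∈ s, F u a b := by
  classical
  induction s using Finset.induction_on with
  | empty => simp [IncidenceAlgebra.zero_apply]
  | insert _ _ h ih =>
      rw [Finset.sum_insert h, Finset.sum_insert h, IncidenceAlgebra.add_apply, ih]

theorem qel_apply_self (zt a : X) : qel k X zt a zt = if a ≤ zt then 1 else 0 := by
  rw [qel, ia_sum_apply]
  have h1 : ∀ u ∈ Finset.univ.filter (· ≤ zt),
      cpath k X u zt a zt = if a = u then (1 : k) else 0 := by
    intro u hu
    have hu' := (Finset.mem_filter.mp hu).2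
    show (if a = u ∧ zt = zt ∧ u ≤ zt then (1 : k) else 0) = if a = u then 1 else 0
    simp [hu']
  rw [Finset.sum_congr rfl h1, Finset.sum_ite_eq]
  simp

theorem qel_mul_cpath_apply (zt z a : X) (h : zt ≤ z) :
    (qel k X zt * cpath k X zt z) a z = if a ≤ zt then 1 else 0 := by
  rw [IncidenceAlgebra.mul_apply]
  have h1 : ∀ m ∈ Finset.Icc a z, qel k X zt a m * cpath k X zt z m z
      = if m = zt then qel k X zt a zt else 0 := by
    intro m _
    show qel k X zt a m * (if m = zt ∧ z = z ∧ zt ≤ z then (1 : k) else 0) = _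
    by_cases hm : m = zt
    · subst hm; simp [h]
    · simp [hm]
  rw [Finset.sum_congr rfl h1, Finset.sum_ite_eq' (Finset.Icc a z) zt, qel_apply_self]
  by_cases haz : a ≤ zt <;> simp [Finset.mem_Icc, haz, h]

/-- The evaluation functional on `kC^i ⊗_{Λ₀} Λ` extracting the coefficient of
`q ⊗ c_{vtx q, b}`. -/
noncomputable def Fq (C : ∀ i : ℕ, Set (Amb k X i)) (i : ℕ) (q : Amb k X i) (b : X) :
    (↥(Finsupp.supported k k (C i)) ⊗[Lam0 k X] Lam k X) →+ k :=
  TensorProduct.liftAddHom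
    (AddMonoidHom.mk'
      (fun w => AddMonoidHom.mk'
        (fun lam => ((w : Amb k X i →₀ k) q) * lam (vtx k X i q) b)
        (fun l1 l2 => by
          show (w : Amb k X i →₀ k) q * ((l1 + l2) (vtx k X i q) b) = _
          rw [IncidenceAlgebra.add_apply]; ring))
      (fun w1 w2 => AddMonoidHom.ext fun lam => by
        show ((w1 + w2 : ↥(Finsupp.supported k k (C i))) : Amb k X i →₀ k) q
              * lam (vtx k X i q) b
            = ((w1 : Amb k X i →₀ k) q) * lam (vtx k X i q) b
              + ((w2 : Amb k X i →₀ k) q) * lam (vtx k X i q) b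
        rw [Submodule.coe_add, Finsupp.add_apply]
        ring))
    (by
      intro f w lam
      show ((f • w : ↥(Finsupp.supported k k (C i))) : Amb k X i →₀ k) q
            * lam (vtx k X i q) b
          = (w : Amb k X i →₀ k) q * ((diagHom k X f * lam) (vtx k X i q) b)
      have h1 : ((f • w : ↥(Finsupp.supported k k (C i))) : Amb k X i →₀ k)
          = phiAmb k X i f (w : Amb k X i →₀ k) := rfl
      rw [h1, phiAmb_apply, diag_mul_apply]
      ring)

theorem Fq_tmul (C : ∀ i : ℕ, Set (Amb k X i)) (i : ℕ) (q : Amb k X i) (b : X)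
    (w : ↥(Finsupp.supported k k (C i))) (lam : Lam k X) :
    Fq k X C i q b (w ⊗ₜ[Lam0 k X] lam)
      = ((w : Amb k X i →₀ k) q) * lam (vtx k X i q) b := rfl

theorem smul_tmul_k (C : ∀ i : ℕ, Set (Amb k X i)) (i : ℕ) (α : k)
    (m : ↥(Finsupp.supported k k (C i))) (c : Lam k X) :
    (α • m) ⊗ₜ[Lam0 k X] c = m ⊗ₜ[Lam0 k X] (α • c) := by
  have h1 : α • m = ((fun _ => α : Lam0 k X) • m) := by
    apply Subtype.ext
    have h2 : (((fun _ => α : Lam0 k X) • m : ↥(Finsupp.supported k k (C i)))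
        : Amb k X i →₀ k) = phiAmb k X i (fun _ => α) (m : Amb k X i →₀ k) := rfl
    rw [h2]
    ext q
    rw [phiAmb_apply, SetLike.val_smul, Finsupp.smul_apply, smul_eq_mul]
  have h3 : ((fun _ => α : Lam0 k X) • c : Lam k X) = α • c := by
    show diagHom k X (fun _ => α) * c = α • c
    exact dconst_mul k X α c
  rw [h1, TensorProduct.smul_tmul, h3]

theorem mem_Kz_of_mem_C (x : X) (D : CycleData k X x) (i : ℕ) (pp : Amb k X (i + 2))
    (hpp : pp ∈ D.C (i + 2)) : pp.1 ∈ Kz k X D.C i pp.2 := by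
  have h1 : pp.1 ∈ Bset k X D.C i pp.2 := hpp
  have h2 : Submodule.span k (Bset k X D.C i pp.2) ≤ Kz k X D.C i pp.2 := by
    rw [← D.compl i pp.2]; exact le_sup_left
  exact h2 (Submodule.subset_span h1)

theorem Kz_mono (C : ∀ i : ℕ, Set (Amb k X i)) (i : ℕ) {z z' : X} (h : z ≤ z') :
    Kz k X C i z ≤ Kz k X C i z' :=
  inf_le_inf_left _ (Finsupp.supported_mono fun q hq => lt_of_lt_of_le hq h)

theorem Kz_le_Kpred (C : ∀ i : ℕ, Set (Amb k X i)) (i : ℕ) {z' z : X} (h : z' < z) :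
    Kz k X C i z' ≤ Kpred k X C i z := by
  obtain ⟨m, hz'm, hmz⟩ := exists_le_covBy_of_lt h
  exact le_trans (Kz_mono k X C i hz'm) (le_biSup _ hmz)

theorem val_props (x : X) (D : CycleData k X x) (j : ℕ) (pp : Amb k X (j + 1))
    (hpp : pp ∈ D.C (j + 1)) :
    pp.1 ∈ Finsupp.supported k k (D.C j) ∧
      ∀ q, (pp.1 : Amb k X j →₀ k) q ≠ 0 → vtx k X j q < pp.2 := by
  cases j with
  | zero =>
    rw [D.hC1] at hpp
    obtain ⟨y, hxy, hpe⟩ := hpp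
    constructor
    · rw [hpe]
      exact Finsupp.single_mem_supported k 1 (by rw [D.hC0]; exact rfl)
    · intro q hq
      rw [hpe] at hq ⊢
      have hqx : q = x := by
        by_contra hne
        exact hq (Finsupp.single_eq_of_ne' fun hh => hne hh.symm)
      rw [hqx]
      exact hxy.lt
  | succ i =>
    have h := mem_Kz_of_mem_C k X x D i pp hpp
    simp only [Kz, Submodule.mem_inf] at h
    obtain ⟨⟨_, h2⟩, h3⟩ := h
    refine ⟨h2, fun q hq => ?_⟩
    exact (Finsupp.mem_supported k _).mp h3 (Finsupp.mem_support_iff.mpr hq)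

/-- Let `i = j+1 ≥ 1`, `z ∈ X` and `g ∈ ker d_i` with `g = g·c_z`,
written `g = Σ_t α_t (w_t, z_t) ⊗ c_{z_t, z}` with distinct `(w_t, z_t) ∈ C^i`, `z_t ≤ z`.
Set `v = Σ_t α_t (w_t, z_t) ∈ kC^i`.  Then (1) `v ∈ ker ∂_i`; (2) each `(w_t,z_t)` with
`α_t ≠ 0` has `z_t < z`; hence (3) `v ∈ (ker ∂_i)_z`. -/
theorem stmt7 (x : X) (D : CycleData k X x)
    (d : ∀ i : ℕ, TCmod k X D.C (i + 1) →ₗ[(Lam k X)ᵐᵒᵖ] TCmod k X D.C i)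
    (hd : IsDiff k X D d) (j : ℕ) (z : X) (g : TCmod k X D.C (j + 1))
    (hker : g ∈ LinearMap.ker (d j))
    (hgz : MulOpposite.op (statp k X z) • g = g)
    (n : ℕ) (α : Fin n → k) (p : Fin n → Amb k X (j + 1))
    (hp : ∀ t, p t ∈ D.C (j + 1)) (hinj : Function.Injective p)
    (hle : ∀ t, vtx k X (j + 1) (p t) ≤ z)
    (hg : g = ∑ t : Fin n,
      (α t • bas k X D.C (j + 1) (p t) (hp t)) ⊗ₜ[Lam0 k X]
        cpath k X (vtx k X (j + 1) (p t)) z) :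
    ((∑ t : Fin n, Finsupp.single (p t) (α t) : Amb k X (j + 1) →₀ k)
        ∈ LinearMap.ker (bd k X j)) ∧
    (∀ t, α t ≠ 0 → vtx k X (j + 1) (p t) < z) ∧
    ((∑ t : Fin n, Finsupp.single (p t) (α t) : Amb k X (j + 1) →₀ k)
        ∈ Kz k X D.C j z) := by
  classical
  -- basic facts about the cycles appearing in `g`
  have hsupp1 : ∀ t, ((p t).1 : Amb k X j →₀ k) ∈ Finsupp.supported k k (D.C j) :=
    fun t => (val_props k X x D j (p t) (hp t)).1
  have hvtx : ∀ t q, ((p t).1 : Amb k X j →₀ k) q ≠ 0 →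
      vtx k X j q < vtx k X (j + 1) (p t) :=
    fun t q hq => (val_props k X x D j (p t) (hp t)).2 q hq
  -- the image of each summand of `g` under the differential
  have hd0 : ∀ t : Fin n,
      d j ((α t • bas k X D.C (j + 1) (p t) (hp t)) ⊗ₜ[Lam0 k X]
          cpath k X (vtx k X (j + 1) (p t)) z)
        = (⟨(p t).1, hsupp1 t⟩ : ↥(Finsupp.supported k k (D.C j))) ⊗ₜ[Lam0 k X]
            (qel k X (vtx k X (j + 1) (p t))
              * (α t • cpath k X (vtx k X (j + 1) (p t)) z)) := by
    intro t
    have e0 : (MulOpposite.op (α t • cpath k X (vtx k X (j + 1) (p t)) z)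
          • gen k X D.C (j + 1) (p t) (hp t) : TCmod k X D.C (j + 1))
        = bas k X D.C (j + 1) (p t) (hp t) ⊗ₜ[Lam0 k X]
            (1 * (α t • cpath k X (vtx k X (j + 1) (p t)) z)) :=
      opSmul_tmul k X _ _ _ _
    rw [one_mul] at e0
    have e1 : (α t • bas k X D.C (j + 1) (p t) (hp t)) ⊗ₜ[Lam0 k X]
          cpath k X (vtx k X (j + 1) (p t)) z
        = (MulOpposite.op (α t • cpath k X (vtx k X (j + 1) (p t)) z)
            • gen k X D.C (j + 1) (p t) (hp t) : TCmod k X D.C (j + 1)) := by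
      rw [smul_tmul_k, e0]
    rw [e1, map_smul,
      hd j (p t) (hp t) (⟨(p t).1, hsupp1 t⟩ : ↥(Finsupp.supported k k (D.C j))) rfl]
    exact opSmul_tmul k X _ _ _ _
  -- the image of `g` under the differential is zero
  have hgd : (∑ t : Fin n,
      (⟨(p t).1, hsupp1 t⟩ : ↥(Finsupp.supported k k (D.C j))) ⊗ₜ[Lam0 k X]
        (qel k X (vtx k X (j + 1) (p t))
          * (α t • cpath k X (vtx k X (j + 1) (p t)) z)) : TCmod k X D.C j) = 0 := by
    calc (∑ t : Fin n,
        (⟨(p t).1, hsupp1 t⟩ : ↥(Finsupp.supported k k (D.C j))) ⊗ₜ[Lam0 k X]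
          (qel k X (vtx k X (j + 1) (p t))
            * (α t • cpath k X (vtx k X (j + 1) (p t)) z)) : TCmod k X D.C j)
        = d j g := by
          rw [hg]; refine Eq.trans ?_ (map_sum (d j) _ _).symm
          exact Finset.sum_congr rfl fun t _ => (hd0 t).symm
      _ = 0 := LinearMap.mem_ker.mp hker
  -- coefficient extraction
  have key : ∀ q : Amb k X j,
      (∑ t : Fin n, α t * ((p t).1 : Amb k X j →₀ k) q) = 0 := by
    intro q
    have h0 := congrArg (Fq k X D.C j q z) hgd
    replace h0 := (map_sum (Fq k X D.C j q z) _ _).symm.trans (h0.trans (map_zero _))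
    rw [← h0]
    apply Finset.sum_congr rfl
    intro t _
    rw [Fq_tmul]
    show α t * ((p t).1 : Amb k X j →₀ k) q
        = ((p t).1 : Amb k X j →₀ k) q
          * ((qel k X (vtx k X (j + 1) (p t))
              * (α t • cpath k X (vtx k X (j + 1) (p t)) z)) (vtx k X j q) z)
    rw [Algebra.mul_smul_comm, IncidenceAlgebra.constSMul_apply, smul_eq_mul,
      qel_mul_cpath_apply k X _ z _ (hle t)]
    by_cases hw : ((p t).1 : Amb k X j →₀ k) q = 0
    · rw [hw]; ring
    · rw [if_pos (le_of_lt (hvtx t q hw))]; ring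
  -- statement (1)
  have hsum0 : (∑ t : Fin n, α t • ((p t).1 : Amb k X j →₀ k)) = 0 := by
    ext q
    simp only [Finsupp.finset_sum_apply, Finsupp.smul_apply, smul_eq_mul,
      Finsupp.coe_zero, Pi.zero_apply]
    exact key q
  have part1 : ((∑ t : Fin n, Finsupp.single (p t) (α t) : Amb k X (j + 1) →₀ k))
      ∈ LinearMap.ker (bd k X j) := by
    rw [LinearMap.mem_ker, map_sum]
    exact (Finset.sum_congr rfl fun t _ => by
      simp only [bd, Finsupp.linearCombination_single]).trans hsum0
  -- statement (2)
  have part2 : ∀ t, α t ≠ 0 → vtx k X (j + 1) (p t) < z := by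
    cases j with
    | zero =>
      intro t hat
      rcases lt_or_eq_of_le (hle t) with h | h
      · exact h
      exfalso
      have hCt := hp t
      rw [D.hC1] at hCt
      obtain ⟨y, hxy, hpt⟩ := hCt
      have hyz : y = z := by rw [hpt] at h; exact h
      have hxz : x ⋖ z := hyz ▸ hxy
      have hone : ∀ s : Fin n, ((p s).1 : Amb k X 0 →₀ k) x = 1 := by
        intro s
        have hCs := hp s
        rw [D.hC1] at hCs
        obtain ⟨ys, hxys, hps⟩ := hCs
        rw [hps]
        exact Finsupp.single_eq_same
      have hsum : (∑ s : Fin n, α s) = 0 := by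
        rw [← key (show Amb k X 0 from x)]
        exact Finset.sum_congr rfl fun s _ => by rw [hone s, mul_one]
      have hex : ∃ s, s ≠ t ∧ α s ≠ 0 := by
        by_contra hco
        push_neg at hco
        have hst : (∑ s : Fin n, α s) = α t :=
          Finset.sum_eq_single t (fun s _ hs => hco s hs)
            (fun ht => absurd (Finset.mem_univ t) ht)
        exact hat (hst.symm.trans hsum)
      obtain ⟨s, hst, has⟩ := hex
      have hCs := hp s
      rw [D.hC1] at hCs
      obtain ⟨ys, hxys, hps⟩ := hCs
      have hysz : ys < z := by
        rcases lt_or_eq_of_le (hle s) with h' | h'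
        · rw [hps] at h'; exact h'
        · exfalso
          apply hst
          apply hinj
          have hysz' : ys = z := by rw [hps] at h'; exact h'
          rw [hps, hpt, hysz', hyz]
      exact hxz.2 hxys.lt hysz
    | succ i =>
      intro t0 hat0
      rcases lt_or_eq_of_le (hle t0) with h | hz0
      · exact h
      exfalso
      have hmemKz : ∀ t : Fin n, ((p t).1 : Amb k X (i + 1) →₀ k)
          ∈ Kz k X D.C i (vtx k X (i + 1 + 1) (p t)) :=
        fun t => mem_Kz_of_mem_C k X x D i (p t) (hp t)
      rw [← Finset.sum_filter_add_sum_filter_not Finset.univ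
        (fun t => vtx k X (i + 1 + 1) (p t) = z)] at hsum0
      have hmem1 : (∑ t ∈ Finset.univ.filter (fun t => vtx k X (i + 1 + 1) (p t) = z),
          α t • ((p t).1 : Amb k X (i + 1) →₀ k))
          ∈ Submodule.span k (Bset k X D.C i z) := by
        apply Submodule.sum_mem
        intro t ht
        apply Submodule.smul_mem
        apply Submodule.subset_span
        have h2 := (Finset.mem_filter.mp ht).2
        show (⟨(p t).1, z⟩ : Amb k X (i + 1 + 1)) ∈ D.C (i + 1 + 1)
        rw [← h2]
        exact hp t
      have hmem2 : (∑ t ∈ Finset.univ.filter (fun t => ¬ vtx k X (i + 1 + 1) (p t) = z),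
          α t • ((p t).1 : Amb k X (i + 1) →₀ k)) ∈ Kpred k X D.C i z := by
        apply Submodule.sum_mem
        intro t ht
        apply Submodule.smul_mem
        have h2 := (Finset.mem_filter.mp ht).2
        exact Kz_le_Kpred k X D.C i (lt_of_le_of_ne (hle t) h2) (hmemKz t)
      have hneg : (∑ t ∈ Finset.univ.filter (fun t => vtx k X (i + 1 + 1) (p t) = z),
            α t • ((p t).1 : Amb k X (i + 1) →₀ k))
          = - (∑ t ∈ Finset.univ.filter (fun t => ¬ vtx k X (i + 1 + 1) (p t) = z),
            α t • ((p t).1 : Amb k X (i + 1) →₀ k)) :=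
        eq_neg_of_add_eq_zero_left hsum0
      have hin : (∑ t ∈ Finset.univ.filter (fun t => vtx k X (i + 1 + 1) (p t) = z),
            α t • ((p t).1 : Amb k X (i + 1) →₀ k))
          ∈ Submodule.span k (Bset k X D.C i z) ⊓ Kpred k X D.C i z :=
        Submodule.mem_inf.mpr ⟨hmem1, by rw [hneg]; exact neg_mem hmem2⟩
      rw [D.disj i z] at hin
      have hs1 := (Submodule.mem_bot k).mp hin
      -- linear independence of the elements of `B^{i+2}_z`
      have hind := (D.indep i z).comp
        (fun t : {t : Fin n // vtx k X (i + 1 + 1) (p t) = z} =>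
          (⟨(p t.1).1, by
            show (⟨(p t.1).1, z⟩ : Amb k X (i + 1 + 1)) ∈ D.C (i + 1 + 1)
            have he : (⟨(p t.1).1, z⟩ : Amb k X (i + 1 + 1)) = p t.1 :=
              Prod.ext_iff.mpr ⟨rfl, t.2.symm⟩
            exact Set.mem_of_eq_of_mem he (hp t.1)⟩
            : ↥(Bset k X D.C i z)))
        (by
          intro s t hst
          apply Subtype.ext
          apply hinj
          have h1 : (p s.1).1 = (p t.1).1 := congrArg Subtype.val hst
          have h2 : (p s.1).2 = (p t.1).2 := s.2.trans t.2.symm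
          exact Prod.ext h1 h2)
      have hs1' : (∑ t : {t : Fin n // vtx k X (i + 1 + 1) (p t) = z},
          α t.1 • ((p t.1).1 : Amb k X (i + 1) →₀ k)) = 0 := by
        rw [← hs1]
        exact (Finset.sum_subtype (p := fun t : Fin n => vtx k X (i + 1 + 1) (p t) = z)
          (Finset.univ.filter (fun t => vtx k X (i + 1 + 1) (p t) = z))
          (fun t => by simp [Finset.mem_filter])
          (fun t => α t • ((p t).1 : Amb k X (i + 1) →₀ k))).symm
      exact hat0 (Fintype.linearIndependent_iff.mp hind (fun t => α t.1) hs1' ⟨t0, hz0⟩)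
  -- assembling the three statements
  refine ⟨part1, part2, ?_⟩
  simp only [Kz, Submodule.mem_inf]
  refine ⟨⟨part1, ?_⟩, ?_⟩
  · exact Submodule.sum_mem _ fun t _ => Finsupp.single_mem_supported k _ (hp t)
  · apply Submodule.sum_mem
    intro t _
    by_cases h : α t = 0
    · rw [h, Finsupp.single_zero]
      exact Submodule.zero_mem _
    · exact Finsupp.single_mem_supported k _ (part2 t h)
end

section
/- Fix b ∈ X. For every i ≥ 1, the map d_i^* : Hom_Λ(kC^{i-1} ⊗_{Λ_0} Λ, S_b) → Hom_Λ(kC^i ⊗_{Λ_0} Λ, S_b) given by precomposition with d_i is the zero map. -/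
set_option maxRecDepth 16000
set_option linter.unusedSectionVars false
set_option maxHeartbeats 1000000

open Finsupp

variable (k : Type) [Field k] (X : Type) [PartialOrder X] [Fintype X] [DecidableEq X]

variable [DecidableRel (α := X) (· ≤ ·)]

open scoped TensorProduct

noncomputable instance modOpTensorSupp (C : ∀ i : ℕ, Set (Amb k X i)) (i : ℕ) :
    Module (Lam k X)ᵐᵒᵖ (↥(Finsupp.supported k k (C i)) ⊗[Lam0 k X] Lam k X) :=
  modOpTensor k X ↥(Finsupp.supported k k (C i))

theorem opsmul_eq (z : X) (a : Lam k X) (s : SMod k X z) :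
    (MulOpposite.op a) • s = evalHom k X z a • s := rfl

theorem smul_tmul_one (C : ∀ i : ℕ, Set (Amb k X i)) (j : ℕ) (f : Lam0 k X)
    (w : ↥(Finsupp.supported k k (C j))) :
    ((f • w) ⊗ₜ[Lam0 k X] (1 : Lam k X)) =
      (MulOpposite.op (diagHom k X f)) • (w ⊗ₜ[Lam0 k X] (1 : Lam k X)) := by
  erw [opSmul_tmul, one_mul, TensorProduct.smul_tmul]
  congr 1
  show diagHom k X f * 1 = diagHom k X f
  rw [mul_one]

theorem diagHom_apply_diag (f : Lam0 k X) (a : X) : (diagHom k X f) a a = f a := by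
  show (if a = a then f a else 0) = f a
  simp

theorem vanish (C : ∀ i : ℕ, Set (Amb k X i)) (j : ℕ) (b : X)
    (L : TCmod k X C j →ₗ[(Lam k X)ᵐᵒᵖ] SMod k X b)
    (w : ↥(Finsupp.supported k k (C j)))
    (hw : ∀ p ∈ (w : Amb k X j →₀ k).support, vtx k X j p < b) :
    L (w ⊗ₜ[Lam0 k X] (1 : Lam k X)) = 0 := by
  set f : Lam0 k X := fun u => if u < b then (1 : k) else 0 with hf
  have hfw : f • w = w := by
    apply Subtype.ext
    ext q
    show phiAmb k X j f (w : Amb k X j →₀ k) q = (w : Amb k X j →₀ k) q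
    rw [phiAmb_apply]
    by_cases hq : (w : Amb k X j →₀ k) q = 0
    · rw [hq, mul_zero]
    · have hlt := hw q (Finsupp.mem_support_iff.mpr hq)
      rw [hf]
      simp [hlt]
  have h1 : (w ⊗ₜ[Lam0 k X] (1 : Lam k X)) =
      (MulOpposite.op (diagHom k X f)) • (w ⊗ₜ[Lam0 k X] (1 : Lam k X)) := by
    conv_lhs => rw [← hfw]
    exact smul_tmul_one k X C j f w
  have h2 : evalHom k X b (diagHom k X f) = 0 := by
    show (diagHom k X f) b b = 0
    rw [diagHom_apply_diag, hf]
    simp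
  calc L (w ⊗ₜ[Lam0 k X] (1 : Lam k X))
      = L ((MulOpposite.op (diagHom k X f)) • (w ⊗ₜ[Lam0 k X] (1 : Lam k X))) := by rw [← h1]
    _ = (MulOpposite.op (diagHom k X f)) • L (w ⊗ₜ[Lam0 k X] (1 : Lam k X)) := map_smul _ _ _
    _ = evalHom k X b (diagHom k X f) • L (w ⊗ₜ[Lam0 k X] (1 : Lam k X)) := opsmul_eq k X b _ _
    _ = 0 := by rw [h2, zero_smul]

theorem evalHom_qel (z b : X) :
    evalHom k X b (qel k X z) = if b = z then 1 else 0 := by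
  rw [qel, map_sum]
  have h : ∀ u, evalHom k X b (cpath k X u z)
      = if b = u ∧ b = z ∧ u ≤ z then 1 else 0 := fun u => rfl
  simp_rw [h]
  rcases eq_or_ne b z with rfl | hbz
  · rw [if_pos rfl, Finset.sum_eq_single b]
    · simp
    · intro u _ hub
      rw [if_neg]
      rintro ⟨rfl, -, -⟩
      exact hub rfl
    · intro hb
      simp at hb

  · rw [if_neg hbz, Finset.sum_eq_zero]
    intro u _
    rw [if_neg]
    rintro ⟨-, rfl, -⟩
    exact hbz rfl

theorem gen_struct (x : X) (D : CycleData k X x) (i : ℕ)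
    (p : Amb k X (i + 1)) (hp : p ∈ D.C (i + 1)) :
    p.1 ∈ Finsupp.supported k k (D.C i) ∧
      ∀ q ∈ p.1.support, vtx k X i q < p.2 := by
  match i with
  | 0 =>
    rw [D.hC1] at hp
    obtain ⟨y, hxy, hpe⟩ := hp
    have h1 : p.1 = Finsupp.single x 1 := by rw [hpe]; rfl
    have h2 : p.2 = y := by rw [hpe]
    constructor
    · rw [h1, D.hC0]
      exact Finsupp.single_mem_supported k 1 rfl
    · intro q hq
      rw [h1] at hq
      have hqx : q = x := Finset.mem_singleton.mp (Finsupp.support_single_subset hq)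
      rw [hqx, h2]
      exact hxy.lt
  | j + 1 =>
    have hb : p.1 ∈ Bset k X D.C j p.2 := hp
    have hle : Submodule.span k (Bset k X D.C j p.2) ≤ Kz k X D.C j p.2 := by
      rw [← D.compl j p.2]
      exact le_sup_left
    have hkz : p.1 ∈ Kz k X D.C j p.2 := hle (Submodule.subset_span hb)
    rw [Kz, Submodule.mem_inf, Submodule.mem_inf] at hkz
    obtain ⟨⟨-, hsup⟩, hlt⟩ := hkz
    refine ⟨hsup, fun q hq => ?_⟩
    rw [Finsupp.mem_supported] at hlt
    exact hlt hq

theorem gen_case (x : X) (D : CycleData k X x)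
    (d : ∀ i : ℕ, TCmod k X D.C (i + 1) →ₗ[(Lam k X)ᵐᵒᵖ] TCmod k X D.C i)
    (hd : IsDiff k X D d) (b : X) (i : ℕ)
    (ρ : TCmod k X D.C i →ₗ[(Lam k X)ᵐᵒᵖ] SMod k X b)
    (p : Amb k X (i + 1)) (hp : p ∈ D.C (i + 1)) :
    ρ (d i (gen k X D.C (i + 1) p hp)) = 0 := by
  obtain ⟨hw1, hw2⟩ := gen_struct k X x D i p hp
  have hdg := hd i p hp ⟨p.1, hw1⟩ rfl
  rw [hdg]
  have hz : vtx k X (i + 1) p = p.2 := rfl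
  have hsm : ((⟨p.1, hw1⟩ : ↥(Finsupp.supported k k (D.C i)))
        ⊗ₜ[Lam0 k X] qel k X (vtx k X (i + 1) p)) =
      (MulOpposite.op (qel k X p.2)) •
        ((⟨p.1, hw1⟩ : ↥(Finsupp.supported k k (D.C i))) ⊗ₜ[Lam0 k X] (1 : Lam k X)) := by
    erw [opSmul_tmul, one_mul, hz]
  erw [hsm, map_smul, opsmul_eq, evalHom_qel]
  rcases eq_or_ne b p.2 with heq | hbz
  · rw [if_pos heq, one_smul]
    refine vanish k X D.C i b ρ ⟨p.1, hw1⟩ (fun q hq => ?_)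
    rw [heq]
    exact hw2 q hq
  · rw [if_neg hbz, zero_smul]

/-- For every `i ≥ 1`, precomposition with `d_i` is the zero map
`Hom_Λ(kC^{i-1} ⊗ Λ, S_b) → Hom_Λ(kC^i ⊗ Λ, S_b)`. -/
theorem stmt10 (x : X) (D : CycleData k X x)
    (d : ∀ i : ℕ, TCmod k X D.C (i + 1) →ₗ[(Lam k X)ᵐᵒᵖ] TCmod k X D.C i)
    (hd : IsDiff k X D d) (b : X) (i : ℕ)
    (ρ : TCmod k X D.C i →ₗ[(Lam k X)ᵐᵒᵖ] SMod k X b) :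
    ρ.comp (d i) = 0 := by
  have key : ∀ (m : ↥(Finsupp.supported k k (D.C (i + 1)))),
      ρ (d i (m ⊗ₜ[Lam0 k X] (1 : Lam k X))) = 0 := by
    rintro ⟨mv, hm⟩
    have hmem : mv ∈ Submodule.span k
        ((fun p => Finsupp.single p (1 : k)) '' (D.C (i + 1))) := by
      rwa [← Finsupp.supported_eq_span_single]
    revert hm
    refine Submodule.span_induction
      (p := fun v _ => ∀ hv : v ∈ Finsupp.supported k k (D.C (i + 1)),
        ρ (d i ((⟨v, hv⟩ : ↥(Finsupp.supported k k (D.C (i + 1))))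
          ⊗ₜ[Lam0 k X] (1 : Lam k X))) = 0)
      ?_ ?_ ?_ ?_ hmem
    · rintro v ⟨p, hp, rfl⟩ hv
      have hbas : (⟨Finsupp.single p 1, hv⟩ :
          ↥(Finsupp.supported k k (D.C (i + 1)))) = bas k X D.C (i + 1) p hp :=
        Subtype.ext rfl
      rw [hbas]
      exact gen_case k X x D d hd b i ρ p hp
    · intro hv
      have h0 : (⟨0, hv⟩ : ↥(Finsupp.supported k k (D.C (i + 1)))) = 0 :=
        Subtype.ext rfl
      erw [h0, TensorProduct.zero_tmul, map_zero, map_zero]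
    · intro u v hu hv ihu ihv hw
      have hu' : u ∈ Finsupp.supported k k (D.C (i + 1)) := by
        rwa [Finsupp.supported_eq_span_single]
      have hv' : v ∈ Finsupp.supported k k (D.C (i + 1)) := by
        rwa [Finsupp.supported_eq_span_single]
      have hsum : (⟨u + v, hw⟩ : ↥(Finsupp.supported k k (D.C (i + 1)))) =
          ⟨u, hu'⟩ + ⟨v, hv'⟩ := Subtype.ext rfl
      erw [hsum, TensorProduct.add_tmul, map_add, map_add, ihu hu', ihv hv', add_zero]
    · intro c v hv ih hw
      have hv' : v ∈ Finsupp.supported k k (D.C (i + 1)) := by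
        rwa [Finsupp.supported_eq_span_single]
      have hcs : (⟨c • v, hw⟩ : ↥(Finsupp.supported k k (D.C (i + 1)))) =
          ((fun _ : X => c) : Lam0 k X) • ⟨v, hv'⟩ := by
        apply Subtype.ext
        ext q
        show (c • v) q = phiAmb k X (i + 1) (fun _ : X => c) v q
        rw [phiAmb_apply, Finsupp.smul_apply, smul_eq_mul]
      erw [hcs, smul_tmul_one, map_smul, map_smul, opsmul_eq, ih hv', smul_zero]
  apply LinearMap.ext
  intro t
  rw [LinearMap.comp_apply, LinearMap.zero_apply]
  induction t using TensorProduct.induction_on with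
  | zero => erw [map_zero, map_zero]
  | tmul m a =>
    have hma : (m ⊗ₜ[Lam0 k X] a : TCmod k X D.C (i + 1)) =
        (MulOpposite.op a) • (m ⊗ₜ[Lam0 k X] (1 : Lam k X)) := by
      erw [opSmul_tmul, one_mul]
    erw [hma, map_smul, map_smul, key m, smul_zero]
  | add s t ihs iht => erw [map_add, map_add, ihs, iht, add_zero]
end
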